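/- Let F be an algebraically closed field, β₁, β₅, β₈ ∈ F with β₅ ≠ 0, e₁ = (1,0,0), and let k₁, k₂ ≥ 2 be integers. Then for every A ∈ O(F) there exist X, Y ∈ O(F) such that A = (0, e₁; 0, 0)·X^{k₁} + (β₁, 0; β₅e₁, β₈)·Y^{k₂}. -/

import Mathlib

/-- Zorn vector matrices: the split octonion algebra over `F`. -/
structure Oct (F : Type*) where
  a : F              -- upper-left scalar η
  b : Fin 3 → F      -- upper-right vector x
  c : Fin 3 → F      -- lower-left vector y
  d : F              -- lower-right scalar ζ

namespace Oct

variable {F : Type*} [Field F]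

/-- standard bilinear form on F^3 -/
def dot (x y : Fin 3 → F) : F := x 0 * y 0 + x 1 * y 1 + x 2 * y 2

/-- cross product on F^3, satisfying ⟨x ∧ y, z⟩ = det(x,y,z) -/
def cross (x y : Fin 3 → F) : Fin 3 → F :=
  ![x 1 * y 2 - x 2 * y 1, x 2 * y 0 - x 0 * y 2, x 0 * y 1 - x 1 * y 0]

instance : Add (Oct F) :=
  ⟨fun A B => ⟨A.a + B.a, A.b + B.b, A.c + B.c, A.d + B.d⟩⟩

instance : Mul (Oct F) :=
  ⟨fun A B =>
    ⟨A.a * B.a + dot A.b B.c,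
     A.a • B.b + B.d • A.b + cross A.c B.c,
     A.d • B.c + B.a • A.c + cross A.b B.b,
     A.d * B.d + dot A.c B.b⟩⟩

instance : SMul F (Oct F) :=
  ⟨fun t A => ⟨t * A.a, t • A.b, t • A.c, t * A.d⟩⟩

instance : One (Oct F) := ⟨⟨1, 0, 0, 1⟩⟩

/-- powers, via A^{n+1} = A · A^n (well-defined by power-associativity) -/
def pow (A : Oct F) : ℕ → Oct F
  | 0 => 1
  | n + 1 => A * pow A n

/-- octonion conjugation -/
def conj (A : Oct F) : Oct F := ⟨A.d, -A.b, -A.c, A.a⟩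

/-- the norm form -/
def norm (A : Oct F) : F := A.a * A.d - dot A.b A.c

end Oct

/-!
Every element satisfies `A * A = trace A • A - norm A • 1`, so an element `R` of norm zero has
`pow R (n + 1) = trace R ^ n • R`. If moreover `trace R ≠ 0`, then rescaling `R` by a suitable
power of a `k`-th root of `trace R` (which exists as `F` is algebraically closed) gives `X` with
`pow X k = R`. It therefore suffices to write `A = E * P + B * Q`, with `E` and `B` the two fixed
coefficients and `P`, `Q` of norm zero and nonzero trace. This is a linear system in which one
can take `P.b 0 = 0` and `Q.c 0 = 0`; then each norm is the product of the two diagonal entries,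
and one diagonal entry of each of `P` and `Q` is free, so it can be chosen to make that product
zero and the sum nonzero.
-/

namespace Oct

variable {F : Type*} [Field F]

attribute [ext] Oct

def trace (A : Oct F) : F := A.a + A.d

lemma dot_comm (x y : Fin 3 → F) : dot x y = dot y x := by
  simp only [dot]; ring

lemma cross_self (x : Fin 3 → F) : cross x x = 0 := by
  funext i; fin_cases i <;> simp [cross] <;> ring

lemma cross_zero (x : Fin 3 → F) : cross x 0 = 0 := by
  funext i; fin_cases i <;> simp [cross]

lemma dot_smul (t : F) (x y : Fin 3 → F) : dot x (t • y) = t * dot x y := by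
  simp only [dot, Pi.smul_apply, smul_eq_mul]; ring

lemma smul_dot (t : F) (x y : Fin 3 → F) : dot (t • x) y = t * dot x y := by
  simp only [dot, Pi.smul_apply, smul_eq_mul]; ring

lemma cross_smul (t : F) (x y : Fin 3 → F) : cross x (t • y) = t • cross x y := by
  funext i; fin_cases i <;> simp [cross] <;> ring

@[simp] lemma mul_a (A B : Oct F) : (A * B).a = A.a * B.a + dot A.b B.c := rfl
@[simp] lemma mul_b (A B : Oct F) : (A * B).b = A.a • B.b + B.d • A.b + cross A.c B.c := rfl
@[simp] lemma mul_c (A B : Oct F) : (A * B).c = A.d • B.c + B.a • A.c + cross A.b B.b := rfl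
@[simp] lemma mul_d (A B : Oct F) : (A * B).d = A.d * B.d + dot A.c B.b := rfl

@[simp] lemma add_a (A B : Oct F) : (A + B).a = A.a + B.a := rfl
@[simp] lemma add_b (A B : Oct F) : (A + B).b = A.b + B.b := rfl
@[simp] lemma add_c (A B : Oct F) : (A + B).c = A.c + B.c := rfl
@[simp] lemma add_d (A B : Oct F) : (A + B).d = A.d + B.d := rfl

@[simp] lemma one_a : (1 : Oct F).a = 1 := rfl
@[simp] lemma one_b : (1 : Oct F).b = 0 := rfl
@[simp] lemma one_c : (1 : Oct F).c = 0 := rfl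
@[simp] lemma one_d : (1 : Oct F).d = 1 := rfl

@[simp] lemma smul_a (t : F) (A : Oct F) : (t • A).a = t * A.a := rfl
@[simp] lemma smul_b (t : F) (A : Oct F) : (t • A).b = t • A.b := rfl
@[simp] lemma smul_c (t : F) (A : Oct F) : (t • A).c = t • A.c := rfl
@[simp] lemma smul_d (t : F) (A : Oct F) : (t • A).d = t * A.d := rfl

lemma one_smul' (A : Oct F) : (1 : F) • A = A := by
  ext <;> simp

lemma smul_smul' (s t : F) (A : Oct F) : s • t • A = (s * t) • A := by
  ext <;> simp [mul_assoc]

lemma mul_one' (A : Oct F) : A * 1 = A := by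
  ext <;> simp [dot, cross_zero]

lemma mul_smul' (t : F) (A B : Oct F) : A * t • B = t • (A * B) := by
  ext <;> simp [dot_smul, cross_smul, smul_smul] <;> ring

lemma norm_smul (t : F) (A : Oct F) : norm (t • A) = t ^ 2 * norm A := by
  simp only [norm, smul_a, smul_d, smul_b, smul_c, smul_dot, dot_smul]; ring

lemma trace_smul (t : F) (A : Oct F) : trace (t • A) = t * trace A := by
  simp only [trace, smul_a, smul_d]; ring

lemma mul_self_of_norm_eq_zero {A : Oct F} (h : norm A = 0) : A * A = trace A • A := by
  rw [norm, sub_eq_zero] at h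
  ext i
  · simp only [mul_a, smul_a, trace]; rw [← h]; ring
  · simp [cross_self, trace]; ring
  · simp [cross_self, trace]; ring
  · simp only [mul_d, smul_d, trace]; rw [dot_comm, ← h]; ring

lemma pow_succ_of_norm_eq_zero {A : Oct F} (h : norm A = 0) (n : ℕ) :
    pow A (n + 1) = trace A ^ n • A := by
  induction n with
  | zero => simp [pow, mul_one', one_smul']
  | succ n ih => rw [pow, ih, mul_smul', mul_self_of_norm_eq_zero h, smul_smul', pow_succ]

lemma exists_pow_eq_of_norm_eq_zero [IsAlgClosed F] {k : ℕ} (hk : k ≠ 0) {R : Oct F}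
    (hn : norm R = 0) (ht : trace R ≠ 0) : ∃ X : Oct F, pow X k = R := by
  obtain ⟨m, rfl⟩ := Nat.exists_eq_succ_of_ne_zero hk
  obtain ⟨γ, hγ⟩ := IsAlgClosed.exists_pow_nat_eq (trace R) m.succ_pos
  have hγ0 : γ ≠ 0 := by
    rintro rfl
    exact ht (by rw [← hγ, zero_pow m.succ_ne_zero])
  refine ⟨(γ ^ m)⁻¹ • R, ?_⟩
  have hγm : γ ^ m ≠ 0 := pow_ne_zero m hγ0
  rw [pow_succ_of_norm_eq_zero (by rw [norm_smul, hn, mul_zero]), trace_smul, ← hγ, pow_succ,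
    inv_mul_cancel_left₀ hγm, smul_smul', mul_inv_cancel₀ hγm, one_smul']

lemma exists_mul_eq_zero_add_ne_zero (s : F) : ∃ t : F, s * t = 0 ∧ s + t ≠ 0 := by
  by_cases hs : s = 0
  · exact ⟨1, by simp [hs]⟩
  · exact ⟨0, by simp [hs]⟩

lemma exists_norm_eq_zero_eq_mul_add_mul (β₁ β₅ β₈ : F) (hβ₅ : β₅ ≠ 0) (A : Oct F) :
    ∃ P Q : Oct F, norm P = 0 ∧ trace P ≠ 0 ∧ norm Q = 0 ∧ trace Q ≠ 0 ∧
      A = (⟨0, ![1, 0, 0], 0, 0⟩ : Oct F) * P + (⟨β₁, 0, ![β₅, 0, 0], β₈⟩ : Oct F) * Q := by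
  obtain ⟨t, ht⟩ := exists_mul_eq_zero_add_ne_zero (A.c 0 / β₅)
  set q := (A.d - β₈ * t) / β₅
  obtain ⟨u, hu⟩ := exists_mul_eq_zero_add_ne_zero (A.b 0 - β₁ * q)
  refine ⟨⟨u, ![0, A.c 2 + β₈ * A.b 1 / β₅, β₈ * A.b 2 / β₅ - A.c 1],
      ![A.a - β₁ * A.c 0 / β₅, 0, 0], A.b 0 - β₁ * q⟩,
    ⟨A.c 0 / β₅, ![q, 0, 0], ![0, A.b 2 / β₅, -A.b 1 / β₅], t⟩, ?_, ?_, ?_, ?_, ?_⟩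
  · simp [norm, dot, mul_comm u, hu.1]
  · simpa [trace, add_comm u] using hu.2
  · simp [norm, dot, ht.1]
  · simpa [trace] using ht.2
  · ext : 1
    · simp [dot]; field_simp; ring
    · funext i; fin_cases i <;> simp [cross, q] <;> field_simp
    · funext i; fin_cases i <;> simp [cross] <;> field_simp <;> ring
    · simp [dot, q]; field_simp; ring

end Oct

open Oct
theorem stmt_15 {F : Type*} [Field F] [IsAlgClosed F] (β₁ β₅ β₈ : F)
    (hβ₅ : β₅ ≠ 0) (k₁ k₂ : ℕ) (hk₁ : 2 ≤ k₁) (hk₂ : 2 ≤ k₂) (A : Oct F) :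
    ∃ X Y : Oct F,
      A = (⟨0, ![1, 0, 0], 0, 0⟩ : Oct F) * pow X k₁
        + (⟨β₁, 0, ![β₅, 0, 0], β₈⟩ : Oct F) * pow Y k₂ := by
  obtain ⟨P, Q, hPn, hPt, hQn, hQt, hA⟩ := exists_norm_eq_zero_eq_mul_add_mul β₁ β₅ β₈ hβ₅ A
  obtain ⟨X, rfl⟩ := exists_pow_eq_of_norm_eq_zero (k := k₁) (by omega) hPn hPt
  obtain ⟨Y, rfl⟩ := exists_pow_eq_of_norm_eq_zero (k := k₂) (by omega) hQn hQt
  exact ⟨X, Y, hA⟩
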